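/- Let C be a commutative unital C*-algebra. The map sending a character φ : C → ℂ to the restriction of φ to the self-adjoint part C_sa (which takes real values on self-adjoint elements) is a bijection from the Gelfand spectrum Σ(C) onto the set of valuations on C. -/
import Mathlib

open WeakDual WeakDual.CharacterSpace

open ComplexStarModule in
lemma valn_uniq_parts {C : Type*} [NormedCommRing C] [StarRing C] [CStarRing C]
    [NormedAlgebra ℂ C] [StarModule ℂ C]
    (x : C) (a b : selfAdjoint C) (h : x = (a : C) + Complex.I • (b : C)) :
    ℜ x = a ∧ ℑ x = b := by
  subst h
  constructor
  · have h1 := map_add (realPart (A := C)) (a : C) (Complex.I • (b : C))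
    rw [h1, realPart_I_smul, b.property.imaginaryPart]
    ext
    simp [a.property.coe_realPart]
  · have h1 := map_add (imaginaryPart (A := C)) (a : C) (Complex.I • (b : C))
    rw [h1, imaginaryPart_I_smul, a.property.imaginaryPart]
    ext
    simp [b.property.coe_realPart]

open ComplexStarModule in
lemma valn_mul_decomp {C : Type*} [NormedCommRing C] [StarRing C] [CStarRing C]
    [NormedAlgebra ℂ C] [StarModule ℂ C] (x y : C) :
    x * y = ((ℜ x * ℜ y - ℑ x * ℑ y : selfAdjoint C) : C)
      + Complex.I • ((ℜ x * ℑ y + ℑ x * ℜ y : selfAdjoint C) : C) := by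
  conv_lhs => rw [← realPart_add_I_smul_imaginaryPart x, ← realPart_add_I_smul_imaginaryPart y]
  have hI : algebraMap ℂ C Complex.I * algebraMap ℂ C Complex.I = -1 := by
    rw [← map_mul, Complex.I_mul_I, map_neg, map_one]
  simp only [selfAdjoint.val_mul, AddSubgroup.coe_add, AddSubgroup.coe_sub, Algebra.smul_def]
  linear_combination ((ℑ x : C) * (ℑ y : C)) * hI

variable (C : Type*) [NormedCommRing C] [StarRing C] [CStarRing C] [NormedAlgebra ℂ C]
  [StarModule ℂ C] [CompleteSpace C]

/-- A valuation on `C`: a nonzero map `C_sa → ℝ` that is dispersion-free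
(`λ(a²) = λ(a)²`) and linear on commuting operators. -/
structure IsValuation (l : selfAdjoint C → ℝ) : Prop where
  ne_zero : l ≠ 0
  dispersionFree : ∀ a b : selfAdjoint C, (b : C) = (a : C) * (a : C) → l b = l a ^ 2
  linear : ∀ (s t : ℝ) (a b c : selfAdjoint C), (a : C) * (b : C) = (b : C) * (a : C) →
    (c : C) = s • (a : C) + t • (b : C) → l c = s * l a + t * l b

open ComplexStarModule in
/-- Characters of a commutative unital C*-algebra take real values on self-adjoint
elements, and the map sending a character `φ` to its restriction to the self-adjoint part
is a bijection from the Gelfand spectrum `Σ(C)` onto the set of valuations on `C`. -/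
theorem characterSpace_bijOn_valuations :
    (∀ (φ : characterSpace ℂ C) (a : selfAdjoint C), (φ (a : C)).im = 0) ∧
    Set.BijOn (fun (φ : characterSpace ℂ C) => fun a : selfAdjoint C => (φ (a : C)).re)
      Set.univ {l : selfAdjoint C → ℝ | IsValuation C l} := by
  letI : CStarAlgebra C := { }
  have him : ∀ (φ : characterSpace ℂ C) (a : selfAdjoint C), (φ (a : C)).im = 0 := by
    intro φ a
    have h1 : star (φ (a : C)) = φ (a : C) := by
      rw [← map_star]
      exact congrArg φ a.property
    exact Complex.conj_eq_iff_im.mp h1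
  have hreal : ∀ (φ : characterSpace ℂ C) (a : selfAdjoint C),
      φ (a : C) = ((φ (a : C)).re : ℂ) := by
    intro φ a
    exact (Complex.conj_eq_iff_re.mp (by
      have h1 : star (φ (a : C)) = φ (a : C) := by
        rw [← map_star]; exact congrArg φ a.property
      exact h1)).symm
  refine ⟨him, ?_, ?_, ?_⟩
  · -- MapsTo
    intro φ _
    refine ⟨?_, ?_, ?_⟩
    · intro h0
      have h1 : ((φ ((1 : selfAdjoint C) : C)).re) = 0 := congrFun h0 1
      rw [selfAdjoint.val_one, map_one] at h1
      simp at h1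
    · intro a b hab
      have h2 : φ (b : C) = φ (a : C) * φ (a : C) := by rw [hab, map_mul]
      rw [hreal φ a] at h2
      show (φ (b:C)).re = (φ (a:C)).re ^ 2
      rw [h2, ← Complex.ofReal_mul, Complex.ofReal_re, sq]
    · intro s t a b c _ hc
      have : φ (c : C) = (s : ℂ) * φ (a : C) + (t : ℂ) * φ (b : C) := by
        rw [hc, map_add]
        congr 1
        · rw [← Complex.coe_smul, map_smul, smul_eq_mul]
        · rw [← Complex.coe_smul, map_smul, smul_eq_mul]
      rw [hreal φ a, hreal φ b, ← Complex.ofReal_mul, ← Complex.ofReal_mul,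
        ← Complex.ofReal_add] at this
      show (φ (c:C)).re = s * (φ (a:C)).re + t * (φ (b:C)).re
      rw [this, Complex.ofReal_re]
  · -- InjOn
    intro φ _ ψ _ h
    have hsa : ∀ a : selfAdjoint C, φ (a : C) = ψ (a : C) := by
      intro a
      rw [hreal φ a, hreal ψ a]
      exact congrArg Complex.ofReal (congrFun h a)
    have hall : ∀ x : C, φ x = ψ x := by
      intro x
      conv_lhs => rw [← realPart_add_I_smul_imaginaryPart x]
      conv_rhs => rw [← realPart_add_I_smul_imaginaryPart x]
      rw [map_add, map_add, map_smul, map_smul, hsa (ℜ x), hsa (ℑ x)]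
    exact Subtype.ext (ContinuousLinearMap.ext hall)
  · -- SurjOn
    intro l hl
    have ladd : ∀ a b : selfAdjoint C, l (a + b) = l a + l b := by
      intro a b
      have := hl.linear 1 1 a b (a + b) (mul_comm _ _) (by push_cast; simp)
      simpa using this
    have lsmul : ∀ (s : ℝ) (a : selfAdjoint C), l (s • a) = s * l a := by
      intro s a
      have := hl.linear s 0 a 0 (s • a) (by simp) (by push_cast; simp)
      simpa using this
    have lzero : l 0 = 0 := by
      have := lsmul 0 0; simpa using this
    have lneg : ∀ a : selfAdjoint C, l (-a) = - l a := by
      intro a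
      have := lsmul (-1) a
      simpa using this
    have lsub : ∀ a b : selfAdjoint C, l (a - b) = l a - l b := by
      intro a b
      rw [sub_eq_add_neg, ladd, lneg, sub_eq_add_neg]
    have lmul : ∀ a b : selfAdjoint C, l (a * b) = l a * l b := by
      intro a b
      have h1 : l ((a + b) * (a + b)) = (l a + l b) ^ 2 := by
        rw [hl.dispersionFree (a + b) ((a+b)*(a+b)) (by rw [selfAdjoint.val_mul]), ladd]
      have h2 : (a + b) * (a + b) = a * a + (a * b + a * b) + b * b := by
        ext
        push_cast [selfAdjoint.val_mul]
        ring
      have h3 : l (a * a) = l a ^ 2 := hl.dispersionFree a (a * a) (by rw [selfAdjoint.val_mul])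
      have h4 : l (b * b) = l b ^ 2 := hl.dispersionFree b (b * b) (by rw [selfAdjoint.val_mul])
      rw [h2, ladd, ladd, ladd, h3, h4] at h1
      nlinarith [h1]
    have lone : l 1 = 1 := by
      have h1 : l 1 = l 1 ^ 2 := hl.dispersionFree 1 1 (by simp)
      by_contra hne
      have h0 : l 1 = 0 := by
        rcases mul_eq_zero.mp (show l 1 * (l 1 - 1) = 0 by nlinarith) with h | h
        · exact h
        · exact absurd (by linarith) hne
      exact hl.ne_zero (funext fun a => by
        rw [show a = a * 1 from (mul_one a).symm, lmul, h0, mul_zero]; rfl)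
    -- the candidate algebra homomorphism
    have hsa_re : ∀ a : selfAdjoint C, ℜ ((a : C)) = a := fun a =>
      Subtype.ext a.property.coe_realPart
    have hsa_im : ∀ a : selfAdjoint C, ℑ ((a : C)) = 0 := fun a => a.property.imaginaryPart
    let f : C →ₐ[ℂ] ℂ :=
      { toFun := fun x => (l (ℜ x) : ℂ) + Complex.I * (l (ℑ x) : ℂ)
        map_one' := by
          show (l (ℜ (1:C)) : ℂ) + Complex.I * (l (ℑ (1:C)) : ℂ) = 1
          rw [← (selfAdjoint.val_one : ((1 : selfAdjoint C) : C) = 1), hsa_re, hsa_im,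
            lone, lzero]
          simp
        map_mul' := by
          intro x y
          obtain ⟨hr, hi⟩ := valn_uniq_parts (x * y) _ _ (valn_mul_decomp x y)
          show (l (ℜ (x*y)) : ℂ) + Complex.I * (l (ℑ (x*y)) : ℂ)
            = ((l (ℜ x) : ℂ) + Complex.I * (l (ℑ x) : ℂ))
              * ((l (ℜ y) : ℂ) + Complex.I * (l (ℑ y) : ℂ))
          rw [hr, hi, lsub, ladd, lmul, lmul, lmul, lmul]
          push_cast
          linear_combination (-(l (ℑ x) : ℂ) * (l (ℑ y) : ℂ)) * Complex.I_mul_I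
        map_zero' := by
          show (l (ℜ (0:C)) : ℂ) + Complex.I * (l (ℑ (0:C)) : ℂ) = 0
          rw [map_zero, map_zero, lzero]
          simp
        map_add' := by
          intro x y
          show (l (ℜ (x+y)) : ℂ) + Complex.I * (l (ℑ (x+y)) : ℂ)
            = ((l (ℜ x) : ℂ) + Complex.I * (l (ℑ x) : ℂ))
              + ((l (ℜ y) : ℂ) + Complex.I * (l (ℑ y) : ℂ))
          rw [map_add, map_add, ladd, ladd]
          push_cast
          ring
        commutes' := by
          intro r
          have h1 : algebraMap ℂ C r = (r.re : ℝ) • ((1 : selfAdjoint C) : C)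
              + Complex.I • ((r.im : ℝ) • ((1 : selfAdjoint C) : C)) := by
            rw [Algebra.algebraMap_eq_smul_one, selfAdjoint.val_one]
            conv_lhs => rw [← Complex.re_add_im r]
            rw [add_smul, ← Complex.coe_smul, mul_comm, mul_smul, ← Complex.coe_smul]
          obtain ⟨hr, hi⟩ := valn_uniq_parts (algebraMap ℂ C r)
            ((r.re : ℝ) • 1) ((r.im : ℝ) • 1)
            (by rwa [selfAdjoint.val_smul, selfAdjoint.val_smul, selfAdjoint.val_one])
          show (l (ℜ (algebraMap ℂ C r)) : ℂ) + Complex.I * (l (ℑ (algebraMap ℂ C r)) : ℂ) = r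
          rw [hr, hi, lsmul, lsmul, lone, mul_one, mul_one, mul_comm, Complex.re_add_im] }
    refine ⟨equivAlgHom.symm f, Set.mem_univ _, ?_⟩
    funext a
    show ((equivAlgHom.symm f : characterSpace ℂ C) ((a : C))).re = l a
    rw [show ((equivAlgHom.symm f : characterSpace ℂ C) ((a : C))) = f (a : C) from
      congrFun (equivAlgHom_symm_coe f) _]
    show ((l (ℜ ((a : C))) : ℂ) + Complex.I * (l (ℑ ((a : C))) : ℂ)).re = l a
    rw [hsa_re a, hsa_im a, lzero]
    simp
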